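/- Define g'_2 : ℝ² → ℝ² by g'_2(ξ,t) = (ξ + t, t²(t + ξ) + t⁵ + t⁶) (the normal form of the singularity S_{2,2}). Then the critical value set of g'_2 equals {(x,0) : x ∈ ℝ} ∪ {(−(5/2)t³ − 3t⁴, −(3/2)t⁵ − 2t⁶) : t ∈ ℝ}. In particular the envelope has, besides the support y = 0, a second branch with a singularity of order 5/3 at the origin, tangent to the support. -/

import Mathlib

open Filter Asymptotics

noncomputable def jacDet (f : ℝ × ℝ → ℝ × ℝ) (p : ℝ × ℝ) : ℝ :=
  LinearMap.det ((fderiv ℝ f p) : (ℝ × ℝ) →ₗ[ℝ] (ℝ × ℝ))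

/-- The critical (criminant) set of a map of the plane: points where det Df = 0. -/
def critSet (f : ℝ × ℝ → ℝ × ℝ) : Set (ℝ × ℝ) := {p | jacDet f p = 0}

/-- The critical value set (envelope): image of the critical set. -/
noncomputable def critVal (f : ℝ × ℝ → ℝ × ℝ) : Set (ℝ × ℝ) := Set.image f (critSet f)


lemma det2 (L : ℝ × ℝ →ₗ[ℝ] ℝ × ℝ) :
    LinearMap.det L = (L (1,0)).1 * (L (0,1)).2 - (L (0,1)).1 * (L (1,0)).2 := by
  rw [← LinearMap.det_toMatrix (Module.Basis.finTwoProd ℝ), Matrix.det_fin_two]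
  simp [LinearMap.toMatrix_apply, Module.Basis.finTwoProd]

lemma jac_eq (ξ t : ℝ) :
    jacDet (fun p : ℝ × ℝ => (p.1 + p.2, p.2 ^ 2 * (p.2 + p.1) + p.2 ^ 5 + p.2 ^ 6)) (ξ, t)
      = t * (2 * t + 2 * ξ + 5 * t ^ 3 + 6 * t ^ 4) := by
  have hs := hasFDerivAt_snd (𝕜 := ℝ) (p := (ξ, t)) (E := ℝ) (F := ℝ)
  have hf := hasFDerivAt_fst (𝕜 := ℝ) (p := (ξ, t)) (E := ℝ) (F := ℝ)
  have hp2 := (hasDerivAt_pow 2 t).comp_hasFDerivAt (ξ, t) hs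
  have hp5 := (hasDerivAt_pow 5 t).comp_hasFDerivAt (ξ, t) hs
  have hp6 := (hasDerivAt_pow 6 t).comp_hasFDerivAt (ξ, t) hs
  have h1 := hf.add hs
  have h2 := ((hp2.mul (hs.add hf)).add hp5).add hp6
  have h : HasFDerivAt (fun p : ℝ × ℝ =>
      (p.1 + p.2, p.2 ^ 2 * (p.2 + p.1) + p.2 ^ 5 + p.2 ^ 6)) _ (ξ, t) := h1.prodMk h2
  rw [jacDet, h.fderiv, det2]
  simp
  ring

lemma dpoly (a b : ℝ) (m n : ℕ) :
    deriv (fun t : ℝ => a * t ^ m - b * t ^ n)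
      = fun t : ℝ => (a * m) * t ^ (m - 1) - (b * n) * t ^ (n - 1) := by
  funext t
  rw [show (fun t : ℝ => a * t ^ m - b * t ^ n) = (fun y => a * y ^ m) - (fun y => b * y ^ n) from rfl,
    (((hasDerivAt_pow m t).const_mul a).sub ((hasDerivAt_pow n t).const_mul b)).deriv]
  ring

/-- envelope of the normal form `g'_2` of the singularity `S_{2,2}`:
the support `y = 0` and a second branch with a singularity of order 5/3 at the
origin, tangent to the support. -/
theorem stmt6 (g'2 : ℝ × ℝ → ℝ × ℝ)
    (hdef : ∀ ξ t : ℝ, g'2 (ξ, t) = (ξ + t, t ^ 2 * (t + ξ) + t ^ 5 + t ^ 6)) :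
    critVal g'2 = (Set.range fun x : ℝ => (x, (0 : ℝ))) ∪
      (Set.range fun t : ℝ =>
        (-(5 / 2) * t ^ 3 - 3 * t ^ 4, -(3 / 2) * t ^ 5 - 2 * t ^ 6)) ∧
    (∀ k : ℕ, k < 3 →
      iteratedDeriv k (fun t : ℝ => -(5 / 2) * t ^ 3 - 3 * t ^ 4) 0 = 0) ∧
    iteratedDeriv 3 (fun t : ℝ => -(5 / 2) * t ^ 3 - 3 * t ^ 4) 0 ≠ 0 ∧
    (∀ k : ℕ, k < 5 →
      iteratedDeriv k (fun t : ℝ => -(3 / 2) * t ^ 5 - 2 * t ^ 6) 0 = 0) ∧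
    iteratedDeriv 5 (fun t : ℝ => -(3 / 2) * t ^ 5 - 2 * t ^ 6) 0 ≠ 0 := by
  have hg : g'2 = fun p : ℝ × ℝ =>
      (p.1 + p.2, p.2 ^ 2 * (p.2 + p.1) + p.2 ^ 5 + p.2 ^ 6) := by
    funext p
    obtain ⟨ξ, t⟩ := p
    rw [hdef]
  -- derivative chains for the two branch coordinate functions
  have d1 : deriv (fun t : ℝ => -(5 / 2) * t ^ 3 - 3 * t ^ 4)
      = fun t : ℝ => -(15 / 2) * t ^ 2 - 12 * t ^ 3 := by
    rw [dpoly]; funext t; norm_num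
  have d2 : deriv (fun t : ℝ => -(15 / 2) * t ^ 2 - 12 * t ^ 3)
      = fun t : ℝ => -15 * t ^ 1 - 36 * t ^ 2 := by
    rw [dpoly]; funext t; norm_num
  have d3 : deriv (fun t : ℝ => -15 * t ^ 1 - 36 * t ^ 2)
      = fun t : ℝ => -15 * t ^ 0 - 72 * t ^ 1 := by
    rw [dpoly]; funext t; norm_num
  have e1 : deriv (fun t : ℝ => -(3 / 2) * t ^ 5 - 2 * t ^ 6)
      = fun t : ℝ => -(15 / 2) * t ^ 4 - 12 * t ^ 5 := by
    rw [dpoly]; funext t; norm_num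
  have e2 : deriv (fun t : ℝ => -(15 / 2) * t ^ 4 - 12 * t ^ 5)
      = fun t : ℝ => -30 * t ^ 3 - 60 * t ^ 4 := by
    rw [dpoly]; funext t; norm_num
  have e3 : deriv (fun t : ℝ => -30 * t ^ 3 - 60 * t ^ 4)
      = fun t : ℝ => -90 * t ^ 2 - 240 * t ^ 3 := by
    rw [dpoly]; funext t; norm_num
  have e4 : deriv (fun t : ℝ => -90 * t ^ 2 - 240 * t ^ 3)
      = fun t : ℝ => -180 * t ^ 1 - 720 * t ^ 2 := by
    rw [dpoly]; funext t; norm_num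
  have e5 : deriv (fun t : ℝ => -180 * t ^ 1 - 720 * t ^ 2)
      = fun t : ℝ => -180 * t ^ 0 - 1440 * t ^ 1 := by
    rw [dpoly]; funext t; norm_num
  refine ⟨?_, ?_, ?_, ?_, ?_⟩
  · rw [hg]
    ext ⟨x, y⟩
    simp only [critVal, critSet, Set.mem_image, Set.mem_setOf_eq, Set.mem_union,
      Set.mem_range, Prod.mk.injEq]
    constructor
    · rintro ⟨⟨ξ, t⟩, hcrit, hx, hy⟩
      rw [jac_eq] at hcrit
      dsimp only at hx hy
      rcases mul_eq_zero.1 hcrit with ht | hξ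
      · subst ht
        left
        exact ⟨ξ, by linear_combination hx, by linear_combination hy⟩
      · right
        exact ⟨t, by linear_combination hx - (1/2) * hξ,
          by linear_combination hy - (t^2/2) * hξ⟩
    · rintro (⟨x0, hx0, hy0⟩ | ⟨t, hxt, hyt⟩)
      · refine ⟨(x0, 0), by rw [jac_eq]; ring, by simpa using hx0, by simpa using hy0⟩
      · refine ⟨(-t - (5/2) * t ^ 3 - 3 * t ^ 4, t), by rw [jac_eq]; ring,
          by linear_combination hxt, by linear_combination hyt⟩
  · intro k hk
    interval_cases k
    · simp [iteratedDeriv_zero]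
    · rw [iteratedDeriv_one, d1]; norm_num
    · rw [iteratedDeriv_succ, iteratedDeriv_one, d1, d2]
      norm_num
  · rw [iteratedDeriv_succ, iteratedDeriv_succ, iteratedDeriv_one, d1, d2, d3]
    norm_num
  · intro k hk
    interval_cases k
    · simp [iteratedDeriv_zero]
    · rw [iteratedDeriv_one, e1]; norm_num
    · rw [iteratedDeriv_succ, iteratedDeriv_one, e1, e2]
      norm_num
    · rw [iteratedDeriv_succ, iteratedDeriv_succ, iteratedDeriv_one, e1, e2, e3]
      norm_num
    · rw [iteratedDeriv_succ, iteratedDeriv_succ, iteratedDeriv_succ, iteratedDeriv_one,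
        e1, e2, e3, e4]
      norm_num
  · rw [iteratedDeriv_succ, iteratedDeriv_succ, iteratedDeriv_succ, iteratedDeriv_succ,
      iteratedDeriv_one, e1, e2, e3, e4, e5]
    norm_num
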